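/- There is an absolute constant c' > 0 such that the following holds. Let G = (V,E,w) be a weighted graph on n ≥ 2 vertices with nonnegative weights, let ε > 0, and let G'' = (V,E,w'') be the random graph with w''(e) = w(e) + 10·log n/ε + X_e for independent X_e ~ Lap(1/ε). Then with probability at least 1 − 2n^{−8} over the noise, simultaneously for every 1/3-balanced HC tree T of V: cost_G(T) ≤ cost_{G''}(T) ≤ cost_G(T) + c'·n³·log n/ε. -/

import Mathlib

open MeasureTheory Real

namespace DPHC

/-- Binary hierarchical-clustering trees whose leaves are labeled by `V`. -/
inductive HCTree (V : Type) where
  | leaf : V → HCTree V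
  | node : HCTree V → HCTree V → HCTree V

namespace HCTree

variable {V : Type}

instance : MeasurableSpace (HCTree V) := ⊤

/-- The list of leaf labels of an HC tree. -/
def leaves : HCTree V → List V
  | leaf v => [v]
  | node l r => leaves l ++ leaves r

/-- The number of leaves of an HC tree. -/
def leafCount : HCTree V → ℕ
  | leaf _ => 1
  | node l r => leafCount l + leafCount r

/-- The depth of an HC tree. -/
def depth : HCTree V → ℕ
  | leaf _ => 0
  | node l r => max (depth l) (depth r) + 1

/-- `lcaSize T u v` is the number of leaves of the subtree of `T` rooted at the least
common ancestor of the leaves `u` and `v` (that is, `|T[u ∨ v]|`). -/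
def lcaSize [DecidableEq V] : HCTree V → V → V → ℕ
  | leaf _, _, _ => 1
  | node l r, u, v =>
    if u ∈ leaves l ∧ v ∈ leaves l then lcaSize l u v
    else if u ∈ leaves r ∧ v ∈ leaves r then lcaSize r u v
    else leafCount l + leafCount r

/-- The set of leaf labels of an HC tree, as a finset. -/
def leafFinset [DecidableEq V] (T : HCTree V) : Finset V := (leaves T).toFinset

/-- The list of cluster sizes of the internal nodes of an HC tree. -/
def internalSizes : HCTree V → List ℕ
  | leaf _ => []
  | node l r => (leafCount l + leafCount r) :: (internalSizes l ++ internalSizes r)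

/-- The list of clusters of the internal nodes of an HC tree. -/
def internalClusters [DecidableEq V] : HCTree V → List (Finset V)
  | leaf _ => []
  | node l r => (leafFinset l ∪ leafFinset r) :: (internalClusters l ++ internalClusters r)

/-- An HC tree is 1/3-balanced if every internal split `H → (S, H∖S)` satisfies
`min(|S|, |H∖S|) ≥ |H|/3`. -/
def IsBalanced : HCTree V → Prop
  | leaf _ => True
  | node l r =>
      leafCount l + leafCount r ≤ 3 * leafCount l ∧
      leafCount l + leafCount r ≤ 3 * leafCount r ∧
      IsBalanced l ∧ IsBalanced r

/-- `maxCluster t T u` is the maximal cluster of `T` of size at most `t` containing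
the leaf `u` (the first cluster of size `≤ t` on the root-to-`u` path). -/
def maxCluster [DecidableEq V] (t : ℕ) : HCTree V → V → Finset V
  | leaf a, _ => {a}
  | node l r, u =>
    if leafCount l + leafCount r ≤ t then leafFinset l ∪ leafFinset r
    else if u ∈ leaves l then maxCluster t l u else maxCluster t r u

/-- A valid HC tree of the vertex set `V`: its leaves are in bijection with `V`. -/
def IsHCTree (T : HCTree V) : Prop :=
  (leaves T).Nodup ∧ ∀ v : V, v ∈ leaves T

end HCTree

open HCTree

instance (α : Type*) : MeasurableSpace (Finset α) := ⊤

noncomputable section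

variable {n : ℕ}

/-- `cutWeight E w S T` is the total weight of the edges of `E` with one endpoint in `S`
and the other in `T`. -/
def cutWeight (E : Finset (Fin n × Fin n)) (w : Fin n × Fin n → ℝ)
    (S T : Finset (Fin n)) : ℝ :=
  ∑ e ∈ E.filter (fun e => (e.1 ∈ S ∧ e.2 ∈ T) ∨ (e.1 ∈ T ∧ e.2 ∈ S)), w e

/-- The sparsity (edge expansion) `ψ_G(S) = w(S, V∖S)/|S|` of a cut `S`. -/
def sparsity (E : Finset (Fin n × Fin n)) (w : Fin n × Fin n → ℝ)
    (S : Finset (Fin n)) : ℝ :=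
  cutWeight E w S (Finset.univ \ S) / S.card

/-- The sparsity of a cut `S ⊆ H` inside the vertex-induced subgraph on `H`. -/
def sparsityIn (E : Finset (Fin n × Fin n)) (w : Fin n × Fin n → ℝ)
    (H S : Finset (Fin n)) : ℝ :=
  cutWeight E w S (H \ S) / S.card

/-- A cut `(S, V∖S)` is 1/3-balanced if `min(|S|, |V∖S|) ≥ n/3`. -/
def BalancedCut (n : ℕ) (S : Finset (Fin n)) : Prop :=
  n ≤ 3 * S.card ∧ n ≤ 3 * (n - S.card)

/-- `φ^bal_G`: the minimum sparsity over 1/3-balanced cuts with `|S| ≤ n/2`. -/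
def phiBal (E : Finset (Fin n × Fin n)) (w : Fin n × Fin n → ℝ) : ℝ :=
  sInf {c | ∃ S : Finset (Fin n), BalancedCut n S ∧ 2 * S.card ≤ n ∧ c = sparsity E w S}

/-- `φ^bal` of the vertex-induced subgraph on `H`. -/
def phiBalIn (E : Finset (Fin n × Fin n)) (w : Fin n × Fin n → ℝ)
    (H : Finset (Fin n)) : ℝ :=
  sInf {c | ∃ S : Finset (Fin n), S ⊆ H ∧ H.card ≤ 3 * S.card ∧
    H.card ≤ 3 * (H.card - S.card) ∧ 2 * S.card ≤ H.card ∧ c = sparsityIn E w H S}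

/-- Dasgupta's hierarchical-clustering cost of the tree `T` on the weighted graph
with edge set `E` and weights `w`. -/
def cost (E : Finset (Fin n × Fin n)) (w : Fin n × Fin n → ℝ)
    (T : HCTree (Fin n)) : ℝ :=
  ∑ e ∈ E, w e * (T.lcaSize e.1 e.2 : ℝ)

/-- The optimal Dasgupta cost over all HC trees of the vertex set. -/
def OPT (E : Finset (Fin n × Fin n)) (w : Fin n × Fin n → ℝ) : ℝ :=
  sInf {c | ∃ T : HCTree (Fin n), T.IsHCTree ∧ c = cost E w T}

/-- Neighboring weight functions: both nonnegative on the edge set `E`, equal outside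
of `E`, and with ℓ₁ distance at most 1 on `E`. -/
def Neighboring (E : Finset (Fin n × Fin n)) (w w' : Fin n × Fin n → ℝ) : Prop :=
  (∀ e ∈ E, 0 ≤ w e) ∧ (∀ e ∈ E, 0 ≤ w' e) ∧ (∀ e ∉ E, w e = w' e) ∧
    ∑ e ∈ E, |w e - w' e| ≤ 1

/-- `ε`-weight differential privacy of a randomized algorithm (probability kernel)
from weight functions on the fixed topology `E` to a measurable output space. -/
def IsWeightDP {Ω : Type*} [MeasurableSpace Ω] (E : Finset (Fin n × Fin n))
    (A : (Fin n × Fin n → ℝ) → Measure Ω) (ε : ℝ) : Prop :=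
  ∀ w w', Neighboring E w w' → ∀ C : Set Ω, MeasurableSet C →
    A w C ≤ ENNReal.ofReal (Real.exp ε) * A w' C

/-- The Laplace distribution with scale `b`, with density `x ↦ (1/(2b))·exp (−|x|/b)`. -/
def Lap (b : ℝ) : Measure ℝ :=
  volume.withDensity fun x => ENNReal.ofReal ((2 * b)⁻¹ * Real.exp (-|x| / b))

/-- The product of independent `Lap (1/ε)` noises, one for each pair of vertices. -/
def noisePi (n : ℕ) (ε : ℝ) : Measure ((Fin n × Fin n) → ℝ) :=
  Measure.pi fun _ => Lap (1 / ε)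

/-- The perturbed weights `w''(e) = w(e) + 10·log₂ n/ε + x e`. -/
def perturb {n : ℕ} (ε : ℝ) (w x : Fin n × Fin n → ℝ) : Fin n × Fin n → ℝ :=
  fun e => w e + 10 * Real.logb 2 n / ε + x e

/-- The simple graph associated with a topology `E`. -/
def topoGraph (E : Finset (Fin n × Fin n)) : SimpleGraph (Fin n) where
  Adj a b := a ≠ b ∧ ((a, b) ∈ E ∨ (b, a) ∈ E)
  symm := ⟨fun a b h => ⟨Ne.symm h.1, Or.symm h.2⟩⟩
  loopless := ⟨fun a h => h.1 rfl⟩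

/-- `F` is the edge set of a collection of `n/5` vertex-disjoint 5-cycles covering
all the vertices. -/
def IsFiveCycles (n : ℕ) (F : Finset (Fin n × Fin n)) : Prop :=
  ∃ σ : Equiv.Perm (Fin n), σ ^ 5 = 1 ∧ (∀ v, σ v ≠ v) ∧
    F = Finset.univ.image fun v => (v, σ v)

/-- The complete-graph topology: each unordered pair appears once, sorted. -/
def completeE (n : ℕ) : Finset (Fin n × Fin n) :=
  Finset.univ.filter fun e => e.1 < e.2

/-- The weights of the hard instance from the family `d(n,ε)`: weight `W = 1/(20ε)`
on the edges of the 5-cycles `F`, and `n⁻³` on the remaining edges. -/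
def hardWeight {n : ℕ} (ε : ℝ) (F : Finset (Fin n × Fin n)) : Fin n × Fin n → ℝ :=
  fun e => if e.1 < e.2 then
    (if e ∈ F ∨ (e.2, e.1) ∈ F then 1 / (20 * ε) else ((n : ℝ) ^ 3)⁻¹) else 0

/-- `B(G, r)`: the collection of HC trees of cost at most `r` on `G`. -/
def ballB (E : Finset (Fin n × Fin n)) (w : Fin n × Fin n → ℝ) (r : ℝ) :
    Set (HCTree (Fin n)) :=
  {T | T.IsHCTree ∧ cost E w T ≤ r}

/-- The cost footprint `footprint_T^t(u,v)`: equals `w(u,v)` if `u` and `v` lie in two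
distinct maximal clusters of `T` of size at most `t`, and `0` otherwise. -/
def footprint (w : Fin n × Fin n → ℝ) (t : ℕ) (T : HCTree (Fin n))
    (u v : Fin n) : ℝ :=
  if T.maxCluster t u ≠ T.maxCluster t v then w (u, v) else 0

/-- The HC tree `T` is obtained by recursively splitting the weighted graph `(E, w)` so
that every internal split is an `α`-approximate 1/3-balanced sparsest cut of the
corresponding vertex-induced subgraph. -/
def RecApproxSplit (E : Finset (Fin n × Fin n)) (w : Fin n × Fin n → ℝ) (α : ℝ) :
    HCTree (Fin n) → Prop
  | .leaf _ => True
  | .node l r =>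
      (l.leafCount + r.leafCount ≤ 3 * l.leafCount) ∧
      (l.leafCount + r.leafCount ≤ 3 * r.leafCount) ∧
      sparsityIn E w (l.leafFinset ∪ r.leafFinset) l.leafFinset ≤
        α * phiBalIn E w (l.leafFinset ∪ r.leafFinset) ∧
      RecApproxSplit E w α l ∧ RecApproxSplit E w α r

end


section AuxProof

open HCTree

lemma lcaSize_le_leafCount {V : Type} [DecidableEq V] (T : HCTree V) (u v : V) :
    T.lcaSize u v ≤ T.leafCount := by
  induction T with
  | leaf a => simp [lcaSize, leafCount]
  | node l r ihl ihr =>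
    simp only [lcaSize, leafCount]
    split_ifs with h1 h2
    · exact le_trans ihl (Nat.le_add_right _ _)
    · exact le_trans ihr (Nat.le_add_left _ _)
    · exact le_rfl

lemma leafCount_eq_length {V : Type} (T : HCTree V) : T.leafCount = T.leaves.length := by
  induction T with
  | leaf a => rfl
  | node l r ihl ihr => simp [leafCount, leaves, ihl, ihr]

lemma leafCount_of_isHCTree {n : ℕ} {T : HCTree (Fin n)} (h : T.IsHCTree) :
    T.leafCount = n := by
  rw [leafCount_eq_length]
  have h1 : T.leaves.toFinset = Finset.univ :=
    Finset.eq_univ_iff_forall.2 fun v => List.mem_toFinset.2 (h.2 v)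
  have h2 := List.toFinset_card_of_nodup h.1
  rw [h1] at h2
  simpa using h2.symm

instance lapSigmaFinite (b : ℝ) : SigmaFinite (Lap b) :=
  MeasureTheory.SigmaFinite.withDensity_ofReal fun x => (2 * b)⁻¹ * Real.exp (-|x| / b)

lemma lap_Icc_lower {b t : ℝ} (hb : 0 < b) (ht : 0 ≤ t) :
    ENNReal.ofReal (1 - Real.exp (-t / b)) ≤ Lap b (Set.Icc (-t) t) := by
  have hb' : b ≠ 0 := ne_of_gt hb
  have hcont : Continuous fun x : ℝ => (2 * b)⁻¹ * Real.exp (-|x| / b) := by fun_prop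
  have hcont2 : Continuous fun x : ℝ => Real.exp (-|x| / b) := by fun_prop
  have hle : (-t) ≤ t := by linarith
  have i1 : ∫ x in (-t)..(0:ℝ), Real.exp (-|x| / b)
      = b * (1 - Real.exp (-t / b)) := by
    rw [show (∫ x in (-t)..(0:ℝ), Real.exp (-|x| / b))
        = ∫ x in (-t)..(0:ℝ), Real.exp (b⁻¹ * x) from
      intervalIntegral.integral_congr fun x hx => by
        rw [Set.uIcc_of_le (by linarith : (-t) ≤ (0:ℝ))] at hx
        rw [abs_of_nonpos hx.2]; congr 1; field_simp]
    rw [intervalIntegral.integral_comp_mul_left Real.exp (inv_ne_zero hb')]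
    rw [integral_exp, inv_inv, smul_eq_mul, mul_zero, Real.exp_zero,
      show b⁻¹ * -t = -t / b by field_simp]
  have i2 : ∫ x in (0:ℝ)..t, Real.exp (-|x| / b)
      = b * (1 - Real.exp (-t / b)) := by
    have hc : (-b⁻¹ : ℝ) ≠ 0 := by simpa using inv_ne_zero hb'
    rw [show (∫ x in (0:ℝ)..t, Real.exp (-|x| / b))
        = ∫ x in (0:ℝ)..t, Real.exp (-b⁻¹ * x) from
      intervalIntegral.integral_congr fun x hx => by
        rw [Set.uIcc_of_le ht] at hx
        rw [abs_of_nonneg hx.1]; congr 1; field_simp]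
    rw [intervalIntegral.integral_comp_mul_left Real.exp hc]
    rw [integral_exp, smul_eq_mul, mul_zero, Real.exp_zero,
      show -b⁻¹ * t = -t / b by field_simp]
    field_simp
    ring
  have key : ∫ x in (-t)..t, (2 * b)⁻¹ * Real.exp (-|x| / b) = 1 - Real.exp (-t / b) := by
    rw [intervalIntegral.integral_const_mul,
      ← intervalIntegral.integral_add_adjacent_intervals
        (hcont2.intervalIntegrable (-t) 0) (hcont2.intervalIntegrable 0 t),
      i1, i2]
    field_simp
    ring
  rw [Lap, withDensity_apply _ measurableSet_Icc]
  rw [← MeasureTheory.ofReal_integral_eq_lintegral_ofReal hcont.integrableOn_Icc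
      (Filter.Eventually.of_forall fun x => by positivity)]
  apply ENNReal.ofReal_le_ofReal
  rw [MeasureTheory.integral_Icc_eq_integral_Ioc, ← intervalIntegral.integral_of_le hle, key]

end AuxProof

/-- There is an absolute constant c' > 0 such that, with probability at
least `1 − 2n⁻⁸` over the Laplace noise, simultaneously for every 1/3-balanced HC tree
`T`: `cost_G(T) ≤ cost_{G''}(T) ≤ cost_G(T) + c'·n³·log n/ε`. -/
theorem statement_16 :
    ∃ c' : ℝ, 0 < c' ∧
      ∀ n : ℕ, 2 ≤ n → ∀ ε : ℝ, 0 < ε →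
      ∀ (E : Finset (Fin n × Fin n)) (w : Fin n × Fin n → ℝ),
        (∀ e ∈ E, 0 ≤ w e) →
        ENNReal.ofReal (1 - 2 * (n : ℝ) ^ (-8 : ℝ)) ≤
          noisePi n ε {x | ∀ T : HCTree (Fin n), T.IsHCTree → T.IsBalanced →
            cost E w T ≤ cost E (perturb ε w x) T ∧
            cost E (perturb ε w x) T ≤
              cost E w T + c' * (n : ℝ) ^ 3 * Real.logb 2 n / ε} := by
  refine ⟨20, by norm_num, ?_⟩
  intro n hn ε hε E w hw
  have hn1 : (1:ℝ) < n := by exact_mod_cast Nat.lt_of_lt_of_le one_lt_two hn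
  have hn0 : (0:ℝ) < n := by linarith
  have hlog : 0 < Real.logb 2 n := Real.logb_pos one_lt_two hn1
  set c : ℝ := 10 * Real.logb 2 n / ε with hcdef
  have hc0 : 0 < c := by positivity
  have hdet : ∀ x : Fin n × Fin n → ℝ, (∀ e, x e ∈ Set.Icc (-c) c) →
      x ∈ {x | ∀ T : HCTree (Fin n), T.IsHCTree → T.IsBalanced →
        cost E w T ≤ cost E (perturb ε w x) T ∧
        cost E (perturb ε w x) T ≤ cost E w T + 20 * (n:ℝ)^3 * Real.logb 2 n / ε} := by
    intro x hx T hT _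
    have hL : ∀ u v : Fin n, (T.lcaSize u v : ℝ) ≤ n := by
      intro u v
      have h := lcaSize_le_leafCount T u v
      rw [leafCount_of_isHCTree hT] at h
      exact_mod_cast h
    constructor
    · apply Finset.sum_le_sum
      intro e he
      have h1 := (hx e).1
      have h2 : (0:ℝ) ≤ (T.lcaSize e.1 e.2 : ℝ) := Nat.cast_nonneg _
      have hpe : perturb ε w x e = w e + (c + x e) := by
        simp only [perturb, hcdef]; ring
      rw [hpe]
      nlinarith
    · have expand : cost E (perturb ε w x) T
          = cost E w T + ∑ e ∈ E, (c + x e) * (T.lcaSize e.1 e.2 : ℝ) := by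
        rw [cost, cost, ← Finset.sum_add_distrib]
        refine Finset.sum_congr rfl fun e he => ?_
        simp only [perturb, hcdef]
        ring
      rw [expand]
      have hbound : ∑ e ∈ E, (c + x e) * (T.lcaSize e.1 e.2 : ℝ)
          ≤ (E.card : ℝ) * (2 * c * n) := by
        calc ∑ e ∈ E, (c + x e) * (T.lcaSize e.1 e.2 : ℝ)
            ≤ ∑ _e ∈ E, 2 * c * (n:ℝ) := by
              refine Finset.sum_le_sum fun e he => ?_
              have h1 := (hx e).1
              have h2 := (hx e).2
              have h3 := hL e.1 e.2
              have h4 : (0:ℝ) ≤ (T.lcaSize e.1 e.2 : ℝ) := Nat.cast_nonneg _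
              nlinarith
          _ = (E.card : ℝ) * (2 * c * n) := by rw [Finset.sum_const, nsmul_eq_mul]
      have hcard : (E.card : ℝ) ≤ (n:ℝ) * n := by
        have h : E.card ≤ n * n := by simpa using Finset.card_le_univ E
        exact_mod_cast h
      have h5 : (E.card : ℝ) * (2 * c * n) ≤ ((n:ℝ) * n) * (2 * c * n) :=
        mul_le_mul_of_nonneg_right hcard (by positivity)
      have heq : ((n:ℝ) * n) * (2 * c * n) = 20 * (n:ℝ)^3 * Real.logb 2 n / ε := by
        rw [hcdef]; field_simp; ring
      linarith
  refine le_trans ?_ (measure_mono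
    (fun x hx => hdet x (Set.mem_univ_pi.1 hx)))
  rw [noisePi]
  rw [Measure.pi_pi, Finset.prod_const]
  have hcardU : (Finset.univ : Finset (Fin n × Fin n)).card = n * n := by simp
  rw [hcardU]
  have hb : (0:ℝ) < 1/ε := by positivity
  have hlap := lap_Icc_lower hb hc0.le
  have harg : -c / (1/ε) = -(10 * Real.logb 2 n) := by
    rw [hcdef]; field_simp
  rw [harg] at hlap
  set q : ℝ := Real.exp (-(10 * Real.logb 2 n)) with hq
  have hqpos : 0 < q := Real.exp_pos _
  have hq1 : q ≤ 1 := by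
    rw [hq, show (1:ℝ) = Real.exp 0 from (Real.exp_zero).symm]
    exact Real.exp_le_exp.2 (by nlinarith)
  have hln : Real.log n ≤ Real.logb 2 n := by
    rw [Real.logb, le_div_iff₀ (Real.log_pos one_lt_two)]
    nlinarith [Real.log_le_sub_one_of_pos (by norm_num : (0:ℝ) < 2),
      Real.log_nonneg hn1.le]
  have hq10 : q ≤ (n:ℝ) ^ (-10 : ℝ) := by
    rw [hq, Real.rpow_def_of_pos hn0]
    exact Real.exp_le_exp.2 (by nlinarith)
  calc ENNReal.ofReal (1 - 2 * (n : ℝ) ^ (-8 : ℝ))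
      ≤ ENNReal.ofReal ((1 - q) ^ (n * n)) := by
        apply ENNReal.ofReal_le_ofReal
        have hbern : 1 + ((n*n : ℕ) : ℝ) * (-q) ≤ (1 + (-q)) ^ (n*n) :=
          one_add_mul_le_pow (by nlinarith) (n*n)
        have hcast : ((n*n : ℕ) : ℝ) = (n:ℝ) * n := by push_cast; ring
        have h2 : (n:ℝ) * n * q ≤ 2 * (n:ℝ) ^ (-8:ℝ) := by
          have ha : (n:ℝ) * n * q ≤ (n:ℝ) * n * ((n:ℝ)^(-10:ℝ)) := by nlinarith
          have e1 : (n:ℝ) * n * ((n:ℝ)^(-10:ℝ)) = (n:ℝ)^(-8:ℝ) := by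
            rw [show (n:ℝ) * n = (n:ℝ)^((2:ℕ):ℝ) by rw [Real.rpow_natCast]; ring,
              ← Real.rpow_add hn0]
            norm_num
          have e2 : (0:ℝ) ≤ (n:ℝ)^(-8:ℝ) := (Real.rpow_pos_of_pos hn0 _).le
          linarith [e1 ▸ ha]
        calc 1 - 2 * (n:ℝ)^(-8:ℝ) ≤ 1 - (n:ℝ) * n * q := by linarith
          _ = 1 + ((n*n : ℕ) : ℝ) * (-q) := by rw [hcast]; ring
          _ ≤ (1 + (-q)) ^ (n*n) := hbern
          _ = (1 - q) ^ (n*n) := by ring_nf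
    _ = (ENNReal.ofReal (1 - q)) ^ (n*n) := ENNReal.ofReal_pow (p := 1 - q) (by linarith) (n*n)
    _ ≤ (Lap (1/ε) (Set.Icc (-c) c)) ^ (n*n) := pow_le_pow_left' hlap _

end DPHC
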